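/- Let H be a non-elementary group of isometries of a δ-hyperbolic geodesic space X, generated by a finite symmetric set S with ℓ_X(S) := inf_{x∈X} max_{s∈S} d(x, sx) > 28δ. Then there exist a loxodromic element b ∈ S^{≤2} (a product of at most two generators), and a constant C = C(δ) > 0 and a point o ∈ X with d(o, bo) ≥ ℓ_X(S) − C. -/

import Mathlib

/-!
If an isometry `g` has the gap `d(o, g²o) > d(o, go) + 2δ` at some point `o`, then by induction
`(o · gⁿ⁺¹o)_{gⁿo} ≤ (go · g⁻¹o)_o + δ`, so each step along the orbit adds at least the gap
`d(o, g²o) - d(o, go) - 2δ` to `d(o, gⁿo)`, and `g` is loxodromic. Without the gap, `g` moves the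
midpoint of `[o, go]` by at most `6δ`.

Let `a` be a generator of maximal displacement at some `x`. If `a` has no gap at `x`, it almost
fixes the midpoint `m` of `[x, ax]`; let `s` be a generator of maximal displacement at `m`, which
is at least `ℓ_X(S)`. If `s` has no gap at `m`, then either, seen from `m`, `sm` points towards
`x`, and then `as` has a gap at `m` and moves `m` by at least `d(m, sm) - 6δ`; or it does not,
and then `s` has a gap at `x`: otherwise `s` almost fixes the midpoint of `[x, sx]`, which is
closer to `x` than `m` by maximality of `a`, and this forces `d(m, sm) ≤ 26δ < ℓ_X(S)`.
-/

open Filter Topology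

/-- Products of at most `n` elements of `S`. -/
def wordBall {G : Type*} [Group G] (S : Set G) (n : ℕ) : Set G :=
  {g | ∃ l : List G, l.length ≤ n ∧ (∀ x ∈ l, x ∈ S) ∧ l.prod = g}

noncomputable def gp {X : Type*} [MetricSpace X] (o x y : X) : ℝ :=
  (dist x o + dist y o - dist x y) / 2

def IsGeodesic {X : Type*} [MetricSpace X] (f : ℝ → X) (x y : X) : Prop :=
  f 0 = x ∧ f (dist x y) = y ∧
    ∀ s ∈ Set.Icc (0 : ℝ) (dist x y), ∀ t ∈ Set.Icc (0 : ℝ) (dist x y),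
      dist (f s) (f t) = |s - t|

def GromovHyperbolic (δ : ℝ) (X : Type*) [MetricSpace X] : Prop :=
  ∀ o x y z : X, min (gp o x z) (gp o z y) - δ ≤ gp o x y

/-- `ℓ_x(S)` in the paper. -/
noncomputable def displacement {X H : Type*} [MetricSpace X] [SMul H X] (S : Set H) (x : X) :
    ℝ :=
  ⨆ s ∈ S, dist x (s • x)

/-- `ℓ_X(S)` in the paper. -/
noncomputable def minDisplacement (X : Type*) {H : Type*} [MetricSpace X] [SMul H X] (S : Set H) :
    ℝ :=
  ⨅ x : X, displacement S x

section GromovProduct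

variable {X : Type*} [MetricSpace X]

lemma gp_comm (o x y : X) : gp o x y = gp o y x := by
  unfold gp; rw [dist_comm x y]; ring

lemma gp_nonneg (o x y : X) : 0 ≤ gp o x y := by
  unfold gp; linarith [dist_triangle_right x y o]

lemma gp_self_left (o x : X) : gp o o x = 0 := by
  unfold gp; rw [dist_self, dist_comm]; ring

lemma dist_eq_sub_two_mul_gp (o x y : X) : dist x y = dist x o + dist y o - 2 * gp o x y := by
  unfold gp; ring

lemma gp_le_gp_add_dist (o x y y' : X) : gp o x y ≤ gp o x y' + dist y y' := by
  unfold gp; linarith [dist_triangle y y' o, dist_triangle x y y', dist_comm y y']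

lemma gp_add_gp (x y z : X) : gp y x z + gp z x y = dist y z := by
  unfold gp; rw [dist_comm z y]; ring

lemma IsGeodesic.dist_midpoint_left {f : ℝ → X} {x y : X} (hf : IsGeodesic f x y) :
    dist x (f (dist x y / 2)) = dist x y / 2 := by
  obtain ⟨h0, -, hd⟩ := hf
  have hxy := dist_nonneg (x := x) (y := y)
  have h := hd 0 ⟨le_rfl, hxy⟩ (dist x y / 2) ⟨by linarith, by linarith⟩
  rw [h0] at h
  rw [h, zero_sub, abs_neg, abs_of_nonneg (by linarith)]

lemma IsGeodesic.dist_midpoint_right {f : ℝ → X} {x y : X} (hf : IsGeodesic f x y) :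
    dist (f (dist x y / 2)) y = dist x y / 2 := by
  obtain ⟨-, h1, hd⟩ := hf
  have hxy := dist_nonneg (x := x) (y := y)
  have h := hd (dist x y / 2) ⟨by linarith, by linarith⟩ (dist x y) ⟨hxy, le_rfl⟩
  rw [h1] at h
  rw [h, abs_of_nonpos (by linarith)]
  ring

namespace GromovHyperbolic

variable {δ : ℝ}

lemma nonneg (hX : GromovHyperbolic δ X) (x : X) : 0 ≤ δ := by
  simpa [gp_self_left] using hX x x x x

lemma le_gp_of_le (hX : GromovHyperbolic δ X) {o x y z : X} {c : ℝ}
    (hxz : c ≤ gp o x z) (hzy : c ≤ gp o z y) : c - δ ≤ gp o x y :=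
  (sub_le_sub_right (le_min hxz hzy) δ).trans (hX o x y z)

lemma gp_le_of_lt (hX : GromovHyperbolic δ X) {o x y z : X}
    (hz : gp o x y + δ < gp o z y) : gp o x z ≤ gp o x y + δ := by
  have := hX o x y z
  rw [min_def] at this
  split_ifs at this <;> linarith

end GromovHyperbolic

end GromovProduct

section IsometricAction

variable {X : Type*} [MetricSpace X] {H : Type*} [Group H] [MulAction H X] [IsIsometricSMul H X]

lemma gp_smul (g : H) (o x y : X) : gp (g • o) (g • x) (g • y) = gp o x y := by
  simp only [gp, dist_smul]

lemma dist_inv_smul_left (g : H) (x y : X) : dist (g⁻¹ • x) y = dist x (g • y) := by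
  rw [← dist_smul g, smul_inv_smul]

lemma two_mul_gp_smul_inv_smul (g : H) (o : X) :
    2 * gp o (g • o) (g⁻¹ • o) = 2 * dist o (g • o) - dist o ((g * g) • o) := by
  have h1 : dist (g • o) (g⁻¹ • o) = dist o ((g * g) • o) := by
    rw [dist_comm, dist_inv_smul_left, mul_smul]
  simp only [gp, h1, dist_inv_smul_left, dist_comm (g • o) o]
  ring

lemma dist_pow_smul_pow_succ_smul (g : H) (o : X) (n : ℕ) :
    dist (g ^ n • o) (g ^ (n + 1) • o) = dist o (g • o) := by
  rw [pow_succ, mul_smul, dist_smul]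

lemma dist_pow_smul_le (g : H) (o o' : X) (n : ℕ) :
    dist o (g ^ n • o) ≤ dist o' (g ^ n • o') + 2 * dist o o' := by
  have := dist_triangle4 o o' (g ^ n • o') (g ^ n • o)
  rw [dist_smul, dist_comm o' o] at this
  linarith

lemma subadditive_dist_pow_smul (g : H) (o : X) : Subadditive fun n => dist o (g ^ n • o) := by
  intro p q
  calc dist o (g ^ (p + q) • o) ≤ dist o (g ^ p • o) + dist (g ^ p • o) (g ^ (p + q) • o) :=
        dist_triangle _ _ _
    _ = dist o (g ^ p • o) + dist o (g ^ q • o) := by rw [pow_add, mul_smul, dist_smul]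

end IsometricAction

lemma Subadditive.exists_pos_tendsto_div {u : ℕ → ℝ} (hu : Subadditive u) (hu0 : ∀ n, 0 ≤ u n)
    {ε c : ℝ} (hε : 0 < ε) (hlin : ∀ n : ℕ, n * ε - c ≤ u n) :
    ∃ τ > 0, Tendsto (fun n => u n / n) atTop (𝓝 τ) := by
  have hlim :=
    hu.tendsto_lim ⟨0, Set.forall_mem_range.2 fun n => div_nonneg (hu0 n) n.cast_nonneg⟩
  refine ⟨hu.lim, hε.trans_le ?_, hlim⟩
  have hlow : Tendsto (fun n : ℕ => ε - c / n) atTop (𝓝 ε) := by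
    simpa using tendsto_const_nhds.sub (tendsto_const_div_atTop_nhds_zero_nat c)
  refine le_of_tendsto_of_tendsto hlow hlim (eventually_atTop.2 ⟨1, fun n hn => ?_⟩)
  have hn : (0 : ℝ) < n := by exact_mod_cast hn
  rw [le_div_iff₀ hn, sub_mul, div_mul_cancel₀ c hn.ne', mul_comm]
  exact hlin n

section Displacement

variable {X : Type*} [MetricSpace X] {H : Type*} [SMul H X]

lemma displacement_le {S : Set H} {x : X} {r : ℝ} (h : ∀ s ∈ S, dist x (s • x) ≤ r)
    (hr : 0 ≤ r) : displacement S x ≤ r :=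
  Real.iSup_le (fun s => Real.iSup_le (h s) hr) hr

lemma exists_dist_smul_max {S : Set H} (hS : S.Finite) (hpos : 0 < minDisplacement X S)
    (x : X) : ∃ a ∈ S, (∀ s ∈ S, dist x (s • x) ≤ dist x (a • x)) ∧
      minDisplacement X S ≤ dist x (a • x) := by
  have hle : minDisplacement X S ≤ displacement S x :=
    ciInf_le ⟨0, Set.forall_mem_range.2 fun y =>
      Real.iSup_nonneg fun s => Real.iSup_nonneg fun _ => dist_nonneg⟩ x
  have hne : S.Nonempty := by
    by_contra hempty
    have : displacement S x ≤ 0 :=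
      displacement_le (fun s hs => (hempty ⟨s, hs⟩).elim) le_rfl
    linarith
  obtain ⟨a, haS, hmax⟩ := S.exists_max_image (fun s => dist x (s • x)) hS hne
  exact ⟨a, haS, hmax, hle.trans (displacement_le hmax dist_nonneg)⟩

end Displacement

section WordBall

variable {G : Type*} [Group G] {S : Set G}

lemma mem_wordBall_two_of_mem {s : G} (hs : s ∈ S) : s ∈ wordBall S 2 :=
  ⟨[s], by simp, by simpa using hs, by simp⟩

lemma mul_mem_wordBall_two {a s : G} (ha : a ∈ S) (hs : s ∈ S) : a * s ∈ wordBall S 2 :=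
  ⟨[a, s], by simp, by simp [ha, hs], by simp⟩

end WordBall

namespace GromovHyperbolic

variable {X : Type*} [MetricSpace X] {H : Type*} [Group H] [MulAction H X] [IsIsometricSMul H X]
  {δ : ℝ}

/-- Seen from `gⁿ⁺¹o`, the product `(gⁿ⁺²o · gⁿo)` is the translate of `(go · g⁻¹o)_o`, while
`(o · gⁿo)` is larger by the induction hypothesis and the gap; the four-point condition then
bounds `(gⁿ⁺²o · o)`. -/
lemma gp_pow_smul_le (hX : GromovHyperbolic δ X) {g : H} {o : X}
    (hgap : dist o (g • o) + 2 * δ < dist o ((g * g) • o)) (n : ℕ) :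
    gp (g ^ n • o) o (g ^ (n + 1) • o) ≤ gp o (g • o) (g⁻¹ • o) + δ := by
  have hP := two_mul_gp_smul_inv_smul g o
  induction n with
  | zero =>
    simp only [pow_zero, one_smul, gp_self_left]
    linarith [gp_nonneg o (g • o) (g⁻¹ • o), hX.nonneg o]
  | succ n ih =>
    have hnext : g ^ (n + 1 + 1) • o = g ^ (n + 1) • g • o := by rw [pow_succ, mul_smul]
    have hprev : g ^ n • o = g ^ (n + 1) • g⁻¹ • o := by
      rw [← mul_smul, pow_succ, mul_inv_cancel_right]
    have htrans : gp (g ^ (n + 1) • o) (g ^ (n + 1 + 1) • o) (g ^ n • o) =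
        gp o (g • o) (g⁻¹ • o) := by
      rw [hnext, hprev, gp_smul]
    have hsplit := gp_add_gp o (g ^ n • o) (g ^ (n + 1) • o)
    rw [dist_pow_smul_pow_succ_smul] at hsplit
    have := hX.gp_le_of_lt (o := g ^ (n + 1) • o) (x := g ^ (n + 1 + 1) • o) (y := g ^ n • o)
      (z := o) (by linarith)
    rwa [htrans, gp_comm] at this

lemma natCast_mul_le_dist_pow_smul (hX : GromovHyperbolic δ X) {g : H} {o : X}
    (hgap : dist o (g • o) + 2 * δ < dist o ((g * g) • o)) (n : ℕ) :
    n * (dist o ((g * g) • o) - dist o (g • o) - 2 * δ) ≤ dist o (g ^ n • o) := by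
  induction n with
  | zero => simp
  | succ n ih =>
    have hstep := dist_eq_sub_two_mul_gp (g ^ n • o) o (g ^ (n + 1) • o)
    rw [dist_comm (g ^ (n + 1) • o), dist_pow_smul_pow_succ_smul] at hstep
    have := hX.gp_pow_smul_le hgap n
    have hP := two_mul_gp_smul_inv_smul g o
    push_cast
    linarith

theorem exists_tendsto_dist_pow_smul_div_pos (hX : GromovHyperbolic δ X) {g : H} {o : X}
    (hgap : dist o (g • o) + 2 * δ < dist o ((g * g) • o)) (o' : X) :
    ∃ τ > 0, Tendsto (fun n : ℕ => dist o' (g ^ n • o') / n) atTop (𝓝 τ) :=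
  (subadditive_dist_pow_smul g o').exists_pos_tendsto_div (fun _ => dist_nonneg)
    (ε := dist o ((g * g) • o) - dist o (g • o) - 2 * δ) (c := 2 * dist o o') (by linarith)
    fun n => by linarith [hX.natCast_mul_le_dist_pow_smul hgap n, dist_pow_smul_le g o o' n]

/-- Seen from `gy`, consecutive points of `w, y, g²y, gw` have Gromov product at least
`d(y, gy)/2 - δ`, so `(w · gw) ≥ d(y, gy)/2 - 3δ`, while `w` and `gw` are at distance
`d(y, gy)/2` from `gy`. -/
lemma dist_smul_midpoint_le (hX : GromovHyperbolic δ X) {g : H} {y : X} {f : ℝ → X}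
    (hf : IsGeodesic f y (g • y)) (hg : dist y ((g * g) • y) ≤ dist y (g • y) + 2 * δ) :
    dist (f (dist y (g • y) / 2)) (g • f (dist y (g • y) / 2)) ≤ 6 * δ := by
  set w := f (dist y (g • y) / 2)
  have hyw : dist y w = dist y (g • y) / 2 := hf.dist_midpoint_left
  have hwy : dist w (g • y) = dist y (g • y) / 2 := hf.dist_midpoint_right
  have hδ := hX.nonneg y
  have h1 : gp (g • y) w y = dist y (g • y) / 2 := by
    unfold gp; linarith [dist_comm w y]
  have h2 : gp (g • y) ((g * g) • y) (g • w) = dist y (g • y) / 2 := by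
    rw [mul_smul, gp_smul]
    unfold gp
    linarith [dist_comm w y, dist_comm (g • y) w, dist_comm y (g • y)]
  have h3 : dist y (g • y) / 2 - δ ≤ gp (g • y) y ((g * g) • y) := by
    have : dist ((g * g) • y) (g • y) = dist y (g • y) := by
      rw [mul_smul, dist_smul, dist_comm]
    unfold gp; linarith [dist_comm y (g • y)]
  have h4 := hX.le_gp_of_le h3 (h2.ge.trans' (by linarith))
  have h5 := hX.le_gp_of_le (h1.ge.trans' (by linarith)) h4
  have := dist_eq_sub_two_mul_gp (g • y) w (g • w)
  rw [dist_comm (g • w), dist_smul] at this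
  linarith [dist_comm y w]

/-- Here `m` is the midpoint of `[x, ax]`. Seen from `m`, `sm` points towards `x`, hence so does
`s⁻¹m` (no gap for `s` means `(sm · s⁻¹m)` is large), whereas `asm` points towards `ax`. So `asm`
and `(as)⁻¹m`, which is `6δ`-close to `s⁻¹m`, have small Gromov product. -/
lemma dist_mul_smul_gap_of_lt_gp (hX : GromovHyperbolic δ X) {a s : H} {x m : X}
    (hxm : dist x m = dist x (a • x) / 2) (hma : dist m (a • x) = dist x (a • x) / 2)
    (ham : dist m (a • m) ≤ 6 * δ) (hs : dist m ((s * s) • m) ≤ dist m (s • m) + 2 * δ)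
    (hgp : 4 * δ < gp m (s • m) x) (hR : 24 * δ < dist m (s • m)) :
    dist m (s • m) - 6 * δ ≤ dist m ((a * s) • m) ∧
      dist m ((a * s) • m) + 2 * δ < dist m ((a * s * (a * s)) • m) := by
  have hδ := hX.nonneg m
  have hD : dist m (s • m) - 6 * δ ≤ dist m ((a * s) • m) := by
    have e : dist (a • m) ((a * s) • m) = dist m (s • m) := by rw [mul_smul, dist_smul]
    linarith [dist_triangle (a • m) m ((a * s) • m), dist_comm (a • m) m]
  have hx_as : gp m x ((a * s) • m) ≤ δ := by
    have e : dist ((a * s) • m) (a • x) = dist (s • m) x := by rw [mul_smul, dist_smul]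
    have hzero : gp m x (a • x) = 0 := by
      linarith [dist_eq_sub_two_mul_gp m x (a • x), dist_comm (a • x) m, dist_comm x m]
    have hfar : δ < gp m ((a * s) • m) (a • x) := by
      linarith [dist_eq_sub_two_mul_gp m (s • m) x,
        dist_eq_sub_two_mul_gp m ((a * s) • m) (a • x), dist_comm (a • x) m,
        dist_comm (s • m) m, dist_comm x m, dist_comm ((a * s) • m) m]
    linarith [hX.gp_le_of_lt (o := m) (x := x) (y := a • x) (z := (a * s) • m) (by linarith)]
  have hinv_x : 3 * δ < gp m (s⁻¹ • m) x := by
    have hback : 4 * δ < gp m (s⁻¹ • m) (s • m) := by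
      linarith [two_mul_gp_smul_inv_smul s m, gp_comm m (s • m) (s⁻¹ • m)]
    linarith [hX m (s⁻¹ • m) x (s • m), lt_min hback hgp]
  have has_inv : gp m ((a * s) • m) (s⁻¹ • m) ≤ 2 * δ := by
    have := hX.gp_le_of_lt (o := m) (x := (a * s) • m) (y := x) (z := s⁻¹ • m)
      (by linarith [gp_comm m x ((a * s) • m)])
    linarith [gp_comm m x ((a * s) • m)]
  have hclose : dist (s⁻¹ • m) ((a * s)⁻¹ • m) ≤ 6 * δ := by
    rwa [mul_inv_rev, mul_smul, dist_smul, dist_comm, dist_inv_smul_left]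
  have hsmall := gp_le_gp_add_dist m ((a * s) • m) ((a * s)⁻¹ • m) (s⁻¹ • m)
  rw [dist_comm] at hsmall
  exact ⟨hD, by linarith [two_mul_gp_smul_inv_smul (a * s) m]⟩

/-- Seen from `m`, `w` cannot follow both `x` and `sm`. If it does not follow `x`, it is close
to `m` since `d(x, w) ≤ d(x, m)`; if it does not follow `sm`, going from `w` to `sm` through `sw`
is a shortcut. -/
lemma dist_smul_le_dist_smul_add_gp (hX : GromovHyperbolic δ X) (s : H) {x m w : X}
    (hw : dist x w ≤ dist x m) :
    dist m (s • m) ≤ dist w (s • w) + 4 * (gp m x (s • m) + δ) := by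
  have hc : 0 ≤ gp m x (s • m) + δ := add_nonneg (gp_nonneg _ _ _) (hX.nonneg m)
  have htri := dist_triangle4 m w (s • w) (s • m)
  rw [dist_smul, dist_comm w m] at htri
  rcases min_le_iff.1 (by linarith [hX m x (s • m) w] :
      min (gp m x w) (gp m w (s • m)) ≤ gp m x (s • m) + δ) with hxw | hws
  · linarith [dist_eq_sub_two_mul_gp m x w, dist_comm w m]
  · have := dist_eq_sub_two_mul_gp m w (s • m)
    linarith [dist_triangle w (s • w) (s • m), dist_smul s w m, dist_comm w m,
      dist_comm (s • m) m]

theorem exists_mem_wordBall_two_gap [Nonempty X] (hX : GromovHyperbolic δ X)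
    (hgeo : ∀ x y : X, ∃ f : ℝ → X, IsGeodesic f x y) {S : Set H} (hS : S.Finite)
    (hℓ : 28 * δ < minDisplacement X S) :
    ∃ b ∈ wordBall S 2, ∃ o p : X, dist p (b • p) + 2 * δ < dist p ((b * b) • p) ∧
      minDisplacement X S - 6 * δ ≤ dist o (b • o) := by
  obtain ⟨x⟩ := ‹Nonempty X›
  have hδ := hX.nonneg x
  obtain ⟨a, haS, ha_max, hℓa⟩ := exists_dist_smul_max hS (by linarith) x
  by_cases ha : dist x (a • x) + 2 * δ < dist x ((a * a) • x)
  · exact ⟨a, mem_wordBall_two_of_mem haS, x, x, ha, by linarith⟩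
  obtain ⟨f, hf⟩ := hgeo x (a • x)
  have ham := hX.dist_smul_midpoint_le hf (not_lt.1 ha)
  set m := f (dist x (a • x) / 2)
  obtain ⟨s, hsS, -, hℓs⟩ := exists_dist_smul_max hS (by linarith) m
  by_cases hs : dist m (s • m) + 2 * δ < dist m ((s * s) • m)
  · exact ⟨s, mem_wordBall_two_of_mem hsS, m, m, hs, by linarith⟩
  by_cases hgp : 4 * δ < gp m (s • m) x
  · obtain ⟨hdist, hgap⟩ := hX.dist_mul_smul_gap_of_lt_gp hf.dist_midpoint_left
      hf.dist_midpoint_right ham (not_lt.1 hs) hgp (by linarith)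
    exact ⟨a * s, mul_mem_wordBall_two haS hsS, m, m, hgap, by linarith⟩
  by_cases hsx : dist x (s • x) + 2 * δ < dist x ((s * s) • x)
  · exact ⟨s, mem_wordBall_two_of_mem hsS, m, x, hsx, by linarith⟩
  obtain ⟨f', hf'⟩ := hgeo x (s • x)
  have hw : dist x (f' (dist x (s • x) / 2)) ≤ dist x m := by
    rw [hf'.dist_midpoint_left, hf.dist_midpoint_left]
    linarith [ha_max s hsS]
  have := hX.dist_smul_le_dist_smul_add_gp s hw
  linarith [hX.dist_smul_midpoint_le hf' (not_lt.1 hsx), gp_comm m x (s • m)]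

end GromovHyperbolic

/-- Koubi-type lemma: if every point is moved by at least `28δ` by some generator, then there
is a loxodromic element that is a product of at most two generators, whose displacement at some
point is at least `ℓ_X(S) - C`, with `C` depending only on `δ`. -/
theorem stmt15 (δ : ℝ) (hδ : 0 < δ) :
    ∃ C > (0 : ℝ),
      ∀ (X : Type) [MetricSpace X] [Nonempty X]
        (H : Type) [Group H] [MulAction H X],
        (∀ h : H, Isometry fun x : X => h • x) →
        (∀ x y : X, ∃ f : ℝ → X, IsGeodesic f x y) →
        (∀ o x y z : X, min (gp o x z) (gp o z y) - δ ≤ gp o x y) →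
        ∀ S : Set H, S.Finite → (∀ s ∈ S, s⁻¹ ∈ S) → Subgroup.closure S = ⊤ →
        -- `H` is non-elementary (in particular, not virtually cyclic):
        (¬ ∃ Z : Subgroup H, Z.FiniteIndex ∧ IsCyclic Z) →
        (⨅ x : X, ⨆ s ∈ S, dist x (s • x)) > 28 * δ →
        ∃ b ∈ wordBall S 2, ∃ o : X, ∃ τ > (0 : ℝ),
          Tendsto (fun n : ℕ => dist o ((b ^ n) • o) / n) atTop (𝓝 τ) ∧
          dist o (b • o) ≥ (⨅ x : X, ⨆ s ∈ S, dist x (s • x)) - C := by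
  refine ⟨6 * δ, by positivity, ?_⟩
  intro X _ _ H _ _ hisom hgeo hX S hS _ _ _ hℓ
  have : IsIsometricSMul H X := ⟨hisom⟩
  obtain ⟨b, hb, o, p, hgap, hdisp⟩ := GromovHyperbolic.exists_mem_wordBall_two_gap hX hgeo hS hℓ
  obtain ⟨τ, hτ, hlim⟩ := GromovHyperbolic.exists_tendsto_dist_pow_smul_div_pos hX hgap o
  exact ⟨b, hb, o, τ, hτ, hlim, hdisp⟩
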